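/- Suppose rank(C) = d, so σ_min(C) > 0. For all ρ > ρ₀, all ε ∈ [0, ρ − ρ₀], all n ∈ ℕ and all ω ∈ Ω the following holds: if z̄_{n,ε}(ω) ∈ S_ε(μ_n^(ω)) is an ε-minimizer of φ_{μ_n^(ω)} and x̄_{n,ε}(ω) := ∇L_{μ_n^(ω)}(Cᵀz̄_{n,ε}(ω)), then, writing E_n(ω) := max_{z∈B_ρ} |M_μ(Cᵀz) − M_n(Cᵀz,ω)| and K₁ := exp(ρ‖C‖·|𝒳|), one has ‖x̄_{n,ε}(ω) − x̄_μ‖ ≤ (K₁/(α σ_min(C))) E_n(ω) + (2√(2K₁)/(√α σ_min(C))) √(E_n(ω)) + (K₂‖C‖√(2α) + 2/(√α σ_min(C))) √ε, where x̄_μ is the unique solution of the primal problem for μ and K₂ is any constant (independent of n, ω and the measures) such that ‖∇L_λ(u) − ∇L_λ(v)‖ ≤ K₂‖u − v‖ for all λ ∈ 𝒫(𝒳) and all u, v ∈ ℝ^d with ‖u‖, ‖v‖ ≤ ‖C‖(ρ₀ + √(2αε)). -/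

import Mathlib

open MeasureTheory Filter Topology Metric ProbabilityTheory
open scoped RealInnerProductSpace Pointwise

noncomputable section

abbrev Euc (k : ℕ) : Type := EuclideanSpace ℝ (Fin k)

/-- Moment generating function of a measure on `Euc k`. -/
def Mgf {k : ℕ} (μ : Measure (Euc k)) (y : Euc k) : ℝ :=
  ∫ x, Real.exp ⟪y, x⟫ ∂μ

/-- Log-moment generating function. -/
def Lmgf {k : ℕ} (μ : Measure (Euc k)) (y : Euc k) : ℝ :=
  Real.log (Mgf μ y)

/-- MEM function: Fenchel conjugate of the log-moment generating function. -/
def Kappa {k : ℕ} (μ : Measure (Euc k)) (x : Euc k) : EReal :=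
  ⨆ y : Euc k, ((⟪y, x⟫ - Lmgf μ y : ℝ) : EReal)

/-- Fenchel conjugate of an extended-real-valued function. -/
def EConj {k : ℕ} (g : Euc k → EReal) (w : Euc k) : EReal :=
  ⨆ z : Euc k, (((⟪z, w⟫ : ℝ) : EReal) - g z)

/-- Properness for extended-real-valued functions. -/
def EProper {k : ℕ} (g : Euc k → EReal) : Prop :=
  (∀ z, g z ≠ ⊥) ∧ (∃ z, g z ≠ ⊤)

/-- Convexity for extended-real-valued functions. -/
def EConvex {k : ℕ} (g : Euc k → EReal) : Prop :=
  ∀ x y : Euc k, ∀ a b : ℝ, 0 ≤ a → 0 ≤ b → a + b = 1 →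
    g (a • x + b • y) ≤ (a : EReal) * g x + (b : EReal) * g y

/-- Epigraphical convergence of a sequence of extended-real-valued functions. -/
def EpiConverges {F : Type*} [TopologicalSpace F] (f : ℕ → F → EReal) (g : F → EReal) : Prop :=
  (∀ z : F, ∀ zs : ℕ → F, Tendsto zs atTop (𝓝 z) →
      g z ≤ Filter.liminf (fun n => f n (zs n)) atTop) ∧
  (∀ z : F, ∃ zs : ℕ → F, Tendsto zs atTop (𝓝 z) ∧
      Filter.limsup (fun n => f n (zs n)) atTop ≤ g z)

variable {d m : ℕ}

/-- Primal MEM objective `x ↦ α g(Cx) + κ_μ(x)`. -/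
def PrimalObj (α : ℝ) (g : Euc m → EReal) (C : Euc d →L[ℝ] Euc m)
    (μ : Measure (Euc d)) (x : Euc d) : EReal :=
  (α : EReal) * g (C x) + Kappa μ x

/-- Dual MEM objective `z ↦ α g*(-z/α) + L_μ(Cᵀ z)` for general fidelity. -/
def DualObj (α : ℝ) (g : Euc m → EReal) (C : Euc d →L[ℝ] Euc m)
    (μ : Measure (Euc d)) (z : Euc m) : EReal :=
  (α : EReal) * EConj g (-(α⁻¹ • z)) +
    ((Lmgf μ (ContinuousLinearMap.adjoint C z) : ℝ) : EReal)

/-- Dual MEM objective with quadratic fidelity. -/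
def QDual (α : ℝ) (b : Euc m) (C : Euc d →L[ℝ] Euc m)
    (μ : Measure (Euc d)) (z : Euc m) : ℝ :=
  ‖z‖ ^ 2 / (2 * α) - ⟪b, z⟫ + Lmgf μ (ContinuousLinearMap.adjoint C z)

/-- Empirical moment generating function from samples. -/
def EmpMgf {Ω : Type*} (X : ℕ → Ω → Euc d) (n : ℕ) (ω : Ω) (y : Euc d) : ℝ :=
  (n : ℝ)⁻¹ * ∑ i ∈ Finset.range n, Real.exp ⟪y, X i ω⟫

/-- Empirical log-moment generating function. -/
def EmpLmgf {Ω : Type*} (X : ℕ → Ω → Euc d) (n : ℕ) (ω : Ω) (y : Euc d) : ℝ :=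
  Real.log (EmpMgf X n ω y)

/-- Empirical dual objective, general fidelity. -/
def DualObjEmp {Ω : Type*} (α : ℝ) (g : Euc m → EReal) (C : Euc d →L[ℝ] Euc m)
    (X : ℕ → Ω → Euc d) (n : ℕ) (ω : Ω) (z : Euc m) : EReal :=
  (α : EReal) * EConj g (-(α⁻¹ • z)) +
    ((EmpLmgf X n ω (ContinuousLinearMap.adjoint C z) : ℝ) : EReal)

/-- Empirical dual objective with quadratic fidelity. -/
def QDualEmp {Ω : Type*} (α : ℝ) (b : Euc m) (C : Euc d →L[ℝ] Euc m)
    (X : ℕ → Ω → Euc d) (n : ℕ) (ω : Ω) (z : Euc m) : ℝ :=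
  ‖z‖ ^ 2 / (2 * α) - ⟪b, z⟫ + EmpLmgf X n ω (ContinuousLinearMap.adjoint C z)

/-- `|𝒳| = max_{x ∈ 𝒳} ‖x‖`. -/
def XBound (Xs : Set (Euc d)) : ℝ := sSup ((fun x => ‖x‖) '' Xs)

/-- The constant `ρ̂`. -/
def rhoHat (α : ℝ) (b : Euc m) (C : Euc d →L[ℝ] Euc m) (Xs : Set (Euc d)) : ℝ :=
  2 * α * (‖b‖ + ‖C‖ * XBound Xs)

/-- The constant `ρ₀`. -/
def rho0 (α : ℝ) (b : Euc m) (C : Euc d →L[ℝ] Euc m) (Xs : Set (Euc d)) : ℝ :=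
  max (rhoHat α b C Xs)
    ((rhoHat α b C Xs) ^ 2 / (2 * α) + ‖b‖ * rhoHat α b C Xs +
      rhoHat α b C Xs * ‖C‖ * XBound Xs)

/-- `D_ρ(ν,μ) = max_{z ∈ B_ρ} |L_μ(Cᵀz) − L_ν(Cᵀz)|`. -/
def Drho (ρ : ℝ) (C : Euc d →L[ℝ] Euc m) (ν μ : Measure (Euc d)) : ℝ :=
  sSup ((fun z => |Lmgf μ (ContinuousLinearMap.adjoint C z) -
      Lmgf ν (ContinuousLinearMap.adjoint C z)|) '' Metric.closedBall (0 : Euc m) ρ)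

/-- Smallest singular value of `C`. -/
def sigmaMin (C : Euc d →L[ℝ] Euc m) : ℝ :=
  ⨅ x : Metric.sphere (0 : Euc d) 1, ‖C x.val‖

/-- The set of `ε`-minimizers of the quadratic-fidelity dual objective. -/
def SEps (α : ℝ) (b : Euc m) (C : Euc d →L[ℝ] Euc m) (ν : Measure (Euc d)) (ε : ℝ) :
    Set (Euc m) :=
  {z | ∀ w, QDual α b C ν z ≤ QDual α b C ν w + ε}

/-! The dual objective `φ_ν` is `α⁻¹`-strongly convex and coercive, so its minimizers for `μ`
and for the empirical measure `ν` lie in `B_ρ̂ ⊆ B_ρ`. On `B_ρ` both moment generating functions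
are bounded below by `K₁⁻¹`, hence `|L_μ - L_ν| ≤ K₁ E_n` there, and strong convexity moves the
dual minimizer by at most `2 √(α K₁ E_n)`. The optimality condition `C x̄ = b - α⁻¹ z̄` together
with `σ_min(C) > 0` transfers this to the primal solutions. Finally an `ε`-minimizer lies within
`√(2αε)` of the exact one, and the `K₂`-Lipschitz gradient turns this into the `√ε` term. -/

lemma le_of_forall_one_sub_mul_le {c a : ℝ} (h : ∀ t ∈ Set.Ioo (0 : ℝ) 1, (1 - t) * c ≤ a) :
    c ≤ a := by
  have hlim : Tendsto (fun t : ℝ => (1 - t) * c) (𝓝[>] 0) (𝓝 c) := by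
    simpa using (((tendsto_const_nhds (x := (1 : ℝ))).sub tendsto_id).mul_const c).mono_left
      (nhdsWithin_le_nhds (a := (0 : ℝ)) (s := Set.Ioi 0))
  exact le_of_tendsto hlim (eventually_of_mem (Ioo_mem_nhdsGT one_pos) h)

lemma StrongConvexOn.add_le_of_forall_le {E : Type*} [NormedAddCommGroup E] [NormedSpace ℝ E]
    {f : E → ℝ} {κ : ℝ} (hf : StrongConvexOn Set.univ κ f) {z₀ : E} (hmin : ∀ w, f z₀ ≤ f w)
    (z : E) : f z₀ + κ / 2 * ‖z - z₀‖ ^ 2 ≤ f z := by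
  suffices κ / 2 * ‖z - z₀‖ ^ 2 ≤ f z - f z₀ by linarith
  refine le_of_forall_one_sub_mul_le fun t ⟨ht0, ht1⟩ => le_of_mul_le_mul_left ?_ ht0
  have hconv := hf.2 (Set.mem_univ z₀) (Set.mem_univ z) (sub_nonneg.2 ht1.le) ht0.le
    (sub_add_cancel 1 t)
  rw [norm_sub_rev] at hconv
  have := hmin ((1 - t) • z₀ + t • z)
  simp only [smul_eq_mul] at hconv
  nlinarith

section InnerProduct

variable {F : Type*} [NormedAddCommGroup F] [InnerProductSpace ℝ F]

lemma abs_inner_le_mul {y x : F} {R : ℝ} (hx : ‖x‖ ≤ R) : |⟪y, x⟫| ≤ ‖y‖ * R :=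
  (abs_real_inner_le_norm y x).trans (by gcongr)

lemma hasFDerivAt_inner_left (x w : F) : HasFDerivAt (fun w : F => ⟪w, x⟫) (innerSL ℝ x) w :=
  (innerSL ℝ x).hasFDerivAt.congr_of_eventuallyEq (.of_forall fun _ => real_inner_comm _ _)

lemma IsLocalMin.hasGradientAt_eq_zero [CompleteSpace F] {f : F → ℝ} {z G : F}
    (h : IsLocalMin f z) (hG : HasGradientAt f G z) : G = 0 :=
  (InnerProductSpace.toDual ℝ F).map_eq_zero_iff.1 (h.hasFDerivAt_eq_zero hG.hasFDerivAt)

end InnerProduct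

section Lipschitz

variable {E F : Type*} [NormedAddCommGroup E] [NormedSpace ℝ E] [Nontrivial E]
  [SeminormedAddCommGroup F] {g : E → F} {K r : ℝ}

lemma nonneg_of_norm_sub_le_mul_on_closedBall (hr : 0 < r)
    (hg : ∀ u v, ‖u‖ ≤ r → ‖v‖ ≤ r → ‖g u - g v‖ ≤ K * ‖u - v‖) : 0 ≤ K := by
  obtain ⟨u, hu⟩ := exists_norm_eq E hr.le
  have := (norm_nonneg _).trans (hg u 0 hu.le (by simpa using hr.le))
  rw [sub_zero, hu] at this
  exact nonneg_of_mul_nonneg_left this hr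

lemma norm_sub_le_mul_of_norm_sub_le_mul_on_closedBall
    (hg : ∀ u v, ‖u‖ ≤ r → ‖v‖ ≤ r → ‖g u - g v‖ ≤ K * ‖u - v‖) {u v : E} (hu : ‖u‖ ≤ r)
    (hv : ‖v‖ ≤ r) {δ : ℝ} (huv : ‖u - v‖ ≤ δ) (hδ : δ ≤ r) : ‖g u - g v‖ ≤ K * δ := by
  rcases (norm_nonneg _ |>.trans huv).eq_or_lt with rfl | hδ0
  · rw [norm_le_zero_iff, sub_eq_zero] at huv
    simp [huv]
  · exact (hg u v hu hv).trans (mul_le_mul_of_nonneg_left huv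
      (nonneg_of_norm_sub_le_mul_on_closedBall (hδ0.trans_le hδ) hg))

end Lipschitz

lemma abs_log_sub_log_le {a b c : ℝ} (hc : 0 < c) (ha : c ≤ a) (hb : c ≤ b) :
    |Real.log a - Real.log b| ≤ c⁻¹ * |a - b| := by
  wlog hab : b ≤ a generalizing a b
  · rw [abs_sub_comm, abs_sub_comm a]
    exact this hb ha (le_of_not_ge hab)
  have hb0 := hc.trans_le hb
  rw [abs_of_nonneg (sub_nonneg.2 (Real.log_le_log hb0 hab)), abs_of_nonneg (sub_nonneg.2 hab),
    ← Real.log_div (hb0.trans_le hab).ne' hb0.ne', inv_mul_eq_div]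
  calc Real.log (a / b) ≤ a / b - 1 := Real.log_le_sub_one_of_pos (div_pos (hb0.trans_le hab) hb0)
    _ = (a - b) / b := by field_simp
    _ ≤ (a - b) / c := div_le_div_of_nonneg_left (sub_nonneg.2 hab) hc hb

section Empirical

def empiricalMeasure {E : Type*} [MeasurableSpace E] (x : ℕ → E) (n : ℕ) : Measure E :=
  (n : ENNReal)⁻¹ • ∑ i ∈ Finset.range n, Measure.dirac (x i)

variable {E : Type*} [MeasurableSpace E] {x : ℕ → E} {n : ℕ}

lemma isProbabilityMeasure_empiricalMeasure (hn : n ≠ 0) :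
    IsProbabilityMeasure (empiricalMeasure x n) :=
  ⟨by simp [empiricalMeasure, ENNReal.inv_mul_cancel (Nat.cast_ne_zero.2 hn)]⟩

variable [MeasurableSingletonClass E]

lemma ae_empiricalMeasure {s : Set E} (hx : ∀ i, x i ∈ s) :
    ∀ᵐ y ∂empiricalMeasure x n, y ∈ s := by
  simp [ae_iff, empiricalMeasure, Measure.dirac_apply, hx]

lemma integral_empiricalMeasure {f : E → ℝ} :
    ∫ y, f y ∂empiricalMeasure x n = (n : ℝ)⁻¹ * ∑ i ∈ Finset.range n, f (x i) := by
  rw [empiricalMeasure, integral_smul_measure, integral_finsetSum_measure fun i _ =>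
    integrable_dirac enorm_lt_top]
  simp [integral_dirac]

end Empirical

namespace MEM

open ContinuousLinearMap

section Mgf

variable {k : ℕ} {ν : Measure (Euc k)} {R : ℝ}

lemma nonneg_of_ae_norm_le [NeZero ν] (hν : ∀ᵐ x ∂ν, ‖x‖ ≤ R) : 0 ≤ R :=
  let ⟨x, hx⟩ := hν.exists
  (norm_nonneg x).trans hx

lemma lmgf_zero [IsProbabilityMeasure ν] : Lmgf ν 0 = 0 := by
  simp [Lmgf, Mgf]

variable (hν : ∀ᵐ x ∂ν, ‖x‖ ≤ R)
include hν

lemma exp_inner_le_ae (y : Euc k) : ∀ᵐ x ∂ν, Real.exp ⟪y, x⟫ ≤ Real.exp (‖y‖ * R) :=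
  hν.mono fun _ hx => Real.exp_le_exp.2 (abs_le.1 (abs_inner_le_mul hx)).2

lemma exp_neg_le_exp_inner_ae (y : Euc k) :
    ∀ᵐ x ∂ν, Real.exp (-(‖y‖ * R)) ≤ Real.exp ⟪y, x⟫ :=
  hν.mono fun _ hx => Real.exp_le_exp.2 (abs_le.1 (abs_inner_le_mul hx)).1

lemma integrable_exp_inner [IsFiniteMeasure ν] (y : Euc k) :
    Integrable (fun x => Real.exp ⟪y, x⟫) ν :=
  .mono' (integrable_const _) (by fun_prop) <| (exp_inner_le_ae hν y).mono fun x hx => by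
    rwa [Real.norm_of_nonneg (Real.exp_pos _).le]

variable [IsProbabilityMeasure ν]

lemma mgf_le_exp (y : Euc k) : Mgf ν y ≤ Real.exp (‖y‖ * R) := by
  simpa [Mgf] using integral_mono_ae (integrable_exp_inner hν y) (integrable_const _)
    (exp_inner_le_ae hν y)

lemma exp_neg_le_mgf (y : Euc k) : Real.exp (-(‖y‖ * R)) ≤ Mgf ν y := by
  simpa [Mgf] using integral_mono_ae (integrable_const _) (integrable_exp_inner hν y)
    (exp_neg_le_exp_inner_ae hν y)

lemma mgf_pos (y : Euc k) : 0 < Mgf ν y :=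
  (Real.exp_pos _).trans_le (exp_neg_le_mgf hν y)

lemma abs_lmgf_le (y : Euc k) : |Lmgf ν y| ≤ ‖y‖ * R := by
  rw [abs_le, Lmgf, Real.le_log_iff_exp_le (mgf_pos hν y), Real.log_le_iff_le_exp (mgf_pos hν y)]
  exact ⟨exp_neg_le_mgf hν y, mgf_le_exp hν y⟩

lemma differentiableAt_mgf (y : Euc k) : DifferentiableAt ℝ (Mgf ν) y := by
  have hR := nonneg_of_ae_norm_le hν
  refine (hasFDerivAt_integral_of_dominated_of_fderiv_le (𝕜 := ℝ) (μ := ν)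
    (F' := fun w x => Real.exp ⟪w, x⟫ • innerSL ℝ x)
    (bound := fun _ => Real.exp ((‖y‖ + 1) * R) * R) (ball_mem_nhds y one_pos)
    (.of_forall fun _ => by fun_prop) (integrable_exp_inner hν y) (by fun_prop) ?_
    (integrable_const _) ?_).differentiableAt
  · filter_upwards [hν] with x hx w hw
    have hw : ‖w‖ ≤ ‖y‖ + 1 := by
      linarith [norm_le_norm_add_norm_sub' w y, mem_ball_iff_norm.1 hw]
    rw [norm_smul, innerSL_apply_norm, Real.norm_of_nonneg (Real.exp_pos _).le]
    gcongr
    exact (abs_le.1 (abs_inner_le_mul hx)).2.trans (by gcongr)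
  · exact .of_forall fun x w _ =>
      (Real.hasDerivAt_exp _).comp_hasFDerivAt w (hasFDerivAt_inner_left x w)

lemma differentiable_lmgf : Differentiable ℝ (Lmgf ν) := fun y =>
  (differentiableAt_mgf hν y).log (mgf_pos hν y).ne'

/-- Hölder's inequality with exponents `1/a` and `1/b`. -/
lemma mgf_add_le_rpow_mul_rpow (y z : Euc k) {a b : ℝ} (ha : 0 ≤ a) (hb : 0 ≤ b)
    (hab : a + b = 1) : Mgf ν (a • y + b • z) ≤ Mgf ν y ^ a * Mgf ν z ^ b := by
  have hofReal : ∀ w, ENNReal.ofReal (Mgf ν w) = ∫⁻ x, ENNReal.ofReal (Real.exp ⟪w, x⟫) ∂ν :=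
    fun w => ofReal_integral_eq_lintegral_ofReal (integrable_exp_inner hν w)
      (.of_forall fun _ => (Real.exp_pos _).le)
  have hsplit : ∀ x, ENNReal.ofReal (Real.exp ⟪a • y + b • z, x⟫) =
      ENNReal.ofReal (Real.exp ⟪y, x⟫) ^ a * ENNReal.ofReal (Real.exp ⟪z, x⟫) ^ b := fun x => by
    rw [ENNReal.ofReal_rpow_of_pos (Real.exp_pos _), ENNReal.ofReal_rpow_of_pos (Real.exp_pos _),
      ← ENNReal.ofReal_mul (by positivity), ← Real.exp_mul, ← Real.exp_mul, ← Real.exp_add,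
      inner_add_left, real_inner_smul_left, real_inner_smul_left, mul_comm a, mul_comm b]
  have hy := Real.rpow_nonneg (mgf_pos hν y).le a
  have hz := Real.rpow_nonneg (mgf_pos hν z).le b
  rw [← ENNReal.ofReal_le_ofReal_iff (mul_nonneg hy hz), ENNReal.ofReal_mul hy,
    ← ENNReal.ofReal_rpow_of_nonneg (mgf_pos hν y).le ha,
    ← ENNReal.ofReal_rpow_of_nonneg (mgf_pos hν z).le hb, hofReal, hofReal, hofReal]
  simp_rw [hsplit]
  exact ENNReal.lintegral_mul_norm_pow_le (by fun_prop) (by fun_prop) ha hb hab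

lemma convexOn_lmgf : ConvexOn ℝ Set.univ (Lmgf ν) := by
  refine ⟨convex_univ, fun y _ z _ a b ha hb hab => ?_⟩
  calc Lmgf ν (a • y + b • z) ≤ Real.log (Mgf ν y ^ a * Mgf ν z ^ b) :=
        Real.log_le_log (mgf_pos hν _) (mgf_add_le_rpow_mul_rpow hν y z ha hb hab)
    _ = a • Lmgf ν y + b • Lmgf ν z := by
        rw [Real.log_mul (Real.rpow_pos_of_pos (mgf_pos hν y) a).ne'
          (Real.rpow_pos_of_pos (mgf_pos hν z) b).ne',
          Real.log_rpow (mgf_pos hν y), Real.log_rpow (mgf_pos hν z), Lmgf, Lmgf, smul_eq_mul,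
          smul_eq_mul]

end Mgf

lemma norm_adjoint_apply_le (C : Euc d →L[ℝ] Euc m) (z : Euc m) :
    ‖adjoint C z‖ ≤ ‖C‖ * ‖z‖ :=
  adjoint.norm_map C ▸ (adjoint C).le_opNorm z

section Dual

variable {α : ℝ} {b : Euc m} {C : Euc d →L[ℝ] Euc m} {ν : Measure (Euc d)} {R : ℝ}

lemma strongConvexOn_qDual (hα : 0 < α) (hL : ConvexOn ℝ Set.univ (Lmgf ν)) :
    StrongConvexOn Set.univ α⁻¹ (QDual α b C ν) := by
  rw [strongConvexOn_iff_convex]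
  refine ((LinearMap.convexOn (-innerₛₗ ℝ b) convex_univ).add
    (hL.comp_linearMap (adjoint C).toLinearMap)).congr fun z _ => ?_
  simp only [QDual, Pi.add_apply, LinearMap.neg_apply, innerₛₗ_apply_apply, Function.comp_apply,
    ContinuousLinearMap.coe_coe]
  field_simp
  ring

lemma qDual_zero [IsProbabilityMeasure ν] : QDual α b C ν 0 = 0 := by
  simp [QDual, lmgf_zero]

lemma hasGradientAt_qDual (hα : α ≠ 0) {z : Euc m}
    (hL : DifferentiableAt ℝ (Lmgf ν) (adjoint C z)) :
    HasGradientAt (QDual α b C ν) (α⁻¹ • z - b + C (gradient (Lmgf ν) (adjoint C z))) z := by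
  have hf : QDual α b C ν =
      fun w => ‖w‖ ^ 2 * (2 * α)⁻¹ - innerSL ℝ b w + Lmgf ν (adjoint C w) := by
    ext w
    simp [QDual, div_eq_mul_inv]
  rw [hasGradientAt_iff_hasFDerivAt, hf]
  refine ((((hasStrictFDerivAt_norm_sq z).hasFDerivAt.mul_const (2 * α)⁻¹).sub
    (innerSL ℝ b).hasFDerivAt).add
    (hL.hasGradientAt.hasFDerivAt.comp z (adjoint C).hasFDerivAt)).congr_fderiv ?_
  ext w
  simp only [gradient, add_apply, sub_apply, smul_apply, coe_innerSL_apply, nsmul_eq_mul,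
    comp_apply, map_add, map_sub, map_smul, LinearIsometryEquiv.apply_symm_apply,
    InnerProductSpace.toDual_apply_apply, InnerProductSpace.toDual_symm_apply,
    ← adjoint_inner_right, smul_eq_mul, Nat.cast_ofNat]
  field_simp

variable (hν : ∀ᵐ x ∂ν, ‖x‖ ≤ R) [IsProbabilityMeasure ν]
include hν

lemma sq_div_sub_le_qDual (z : Euc m) :
    ‖z‖ ^ 2 / (2 * α) - (‖b‖ + ‖C‖ * R) * ‖z‖ ≤ QDual α b C ν z := by
  have hL := (abs_le.1 (abs_lmgf_le hν (adjoint C z))).1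
  have hA := mul_le_mul_of_nonneg_right (norm_adjoint_apply_le C z) (nonneg_of_ae_norm_le hν)
  have hb := real_inner_le_norm b z
  rw [QDual]
  linarith

lemma qDual_nonneg_of_le_norm (hα : 0 < α) {z : Euc m}
    (hz : 2 * α * (‖b‖ + ‖C‖ * R) ≤ ‖z‖) : 0 ≤ QDual α b C ν z := by
  refine le_trans ?_ (sq_div_sub_le_qDual hν z)
  rw [sub_nonneg, le_div_iff₀ (by positivity)]
  nlinarith [norm_nonneg z]

lemma norm_le_of_forall_qDual_le (hα : 0 < α) {z₀ : Euc m}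
    (hmin : ∀ w, QDual α b C ν z₀ ≤ QDual α b C ν w) : ‖z₀‖ ≤ 2 * α * (‖b‖ + ‖C‖ * R) := by
  have h := (sq_div_sub_le_qDual hν z₀).trans ((hmin 0).trans qDual_zero.le)
  rw [sub_nonpos, div_le_iff₀ (by positivity)] at h
  have : 0 ≤ 2 * α * (‖b‖ + ‖C‖ * R) := by positivity [nonneg_of_ae_norm_le hν]
  nlinarith [norm_nonneg z₀]

lemma continuous_qDual : Continuous (QDual α b C ν) := by
  have := (differentiable_lmgf hν).continuous
  unfold QDual
  fun_prop

lemma exists_forall_qDual_le (hα : 0 < α) : ∃ z₀, ∀ w, QDual α b C ν z₀ ≤ QDual α b C ν w :=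
  (continuous_qDual hν).exists_forall_le' 0 <|
    (tendsto_norm_cocompact_atTop.eventually_ge_atTop _).mono fun _ hz => by
      rw [qDual_zero]
      exact qDual_nonneg_of_le_norm hν hα hz

lemma apply_gradient_lmgf_of_forall_le (hα : 0 < α) {z₀ : Euc m}
    (hmin : ∀ w, QDual α b C ν z₀ ≤ QDual α b C ν w) :
    C (gradient (Lmgf ν) (adjoint C z₀)) = b - α⁻¹ • z₀ := by
  have h := IsLocalMin.hasGradientAt_eq_zero (.of_forall hmin)
    (hasGradientAt_qDual hα.ne' (differentiable_lmgf hν _))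
  linear_combination (norm := module) h

lemma norm_sub_le_sqrt_of_forall_le_add (hα : 0 < α) {z₀ zε : Euc m} {ε : ℝ}
    (hz₀ : ∀ w, QDual α b C ν z₀ ≤ QDual α b C ν w)
    (hzε : ∀ w, QDual α b C ν zε ≤ QDual α b C ν w + ε) : ‖zε - z₀‖ ≤ √(2 * α * ε) := by
  have hgrowth := (strongConvexOn_qDual hα (convexOn_lmgf hν)).add_le_of_forall_le hz₀ zε
  have := hzε z₀
  refine Real.le_sqrt_of_sq_le ?_
  calc ‖zε - z₀‖ ^ 2 = 2 * α * (α⁻¹ / 2 * ‖zε - z₀‖ ^ 2) := by field_simp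
    _ ≤ 2 * α * ε := mul_le_mul_of_nonneg_left (by linarith) (by positivity)

lemma norm_gradient_lmgf_sub_le_of_forall_le_add [Nontrivial (Euc d)] (hα : 0 < α)
    {z₀ zε : Euc m} {ε r K : ℝ} (hz₀ : ∀ w, QDual α b C ν z₀ ≤ QDual α b C ν w)
    (hzε : ∀ w, QDual α b C ν zε ≤ QDual α b C ν w + ε)
    (hr : ‖C‖ * (2 * α * (‖b‖ + ‖C‖ * R) + √(2 * α * ε)) ≤ r)
    (hK : ∀ u v, ‖u‖ ≤ r → ‖v‖ ≤ r →
      ‖gradient (Lmgf ν) u - gradient (Lmgf ν) v‖ ≤ K * ‖u - v‖) :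
    ‖gradient (Lmgf ν) (adjoint C zε) - gradient (Lmgf ν) (adjoint C z₀)‖ ≤
      K * (‖C‖ * √(2 * α * ε)) := by
  have hz₀r := norm_le_of_forall_qDual_le hν hα hz₀
  have hzεz₀ := norm_sub_le_sqrt_of_forall_le_add hν hα hz₀ hzε
  have hzεr : ‖zε‖ ≤ 2 * α * (‖b‖ + ‖C‖ * R) + √(2 * α * ε) := by
    linarith [norm_le_norm_add_norm_sub' zε z₀]
  have hsqrt := Real.sqrt_nonneg (2 * α * ε)
  have hradius : 0 ≤ 2 * α * (‖b‖ + ‖C‖ * R) := by positivity [nonneg_of_ae_norm_le hν]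
  have hball : ∀ {z : Euc m}, ‖z‖ ≤ 2 * α * (‖b‖ + ‖C‖ * R) + √(2 * α * ε) →
      ‖adjoint C z‖ ≤ r := fun hz => (norm_adjoint_apply_le C _).trans (le_trans (by gcongr) hr)
  refine norm_sub_le_mul_of_norm_sub_le_mul_on_closedBall hK (hball hzεr)
    (hball (by linarith)) ?_ (le_trans (by gcongr; linarith) hr)
  rw [← map_sub]
  exact (norm_adjoint_apply_le C _).trans (by gcongr)

end Dual

lemma sigmaMin_mul_norm_le (C : Euc d →L[ℝ] Euc m) (x : Euc d) : sigmaMin C * ‖x‖ ≤ ‖C x‖ := by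
  rcases eq_or_ne x 0 with rfl | hx
  · simp
  have hunit : ‖x‖⁻¹ • x ∈ sphere (0 : Euc d) 1 := by
    simp [norm_smul, inv_mul_cancel₀ (norm_ne_zero_iff.2 hx)]
  have h : sigmaMin C ≤ ‖C (‖x‖⁻¹ • x)‖ :=
    ciInf_le ⟨0, by rintro _ ⟨w, rfl⟩; positivity⟩ (⟨_, hunit⟩ : sphere (0 : Euc d) 1)
  rw [map_smul, norm_smul, norm_inv, norm_norm] at h
  rwa [le_inv_mul_iff₀ (norm_pos_iff.2 hx), mul_comm] at h

lemma sigmaMin_pos [Nontrivial (Euc d)] {C : Euc d →L[ℝ] Euc m} (hC : Function.Injective C) :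
    0 < sigmaMin C := by
  have hne : (sphere (0 : Euc d) 1).Nonempty := NormedSpace.sphere_nonempty.2 zero_le_one
  have : Nonempty (sphere (0 : Euc d) 1) := hne.to_subtype
  obtain ⟨x₀, hx₀, hmin⟩ := (isCompact_sphere (0 : Euc d) 1).exists_isMinOn hne
    C.continuous.norm.continuousOn
  have hx₀ : x₀ ≠ 0 := ne_zero_of_mem_unit_sphere ⟨x₀, hx₀⟩
  exact (norm_pos_iff.2 ((map_ne_zero_iff C hC).2 hx₀)).trans_le (le_ciInf fun x => hmin x.2)

/-- For `ν` the empirical measure this is the quantity `E_n(ω)`. -/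
def mgfDist (ρ : ℝ) (C : Euc d →L[ℝ] Euc m) (ν μ : Measure (Euc d)) : ℝ :=
  sSup ((fun z => |Mgf μ (adjoint C z) - Mgf ν (adjoint C z)|) '' closedBall (0 : Euc m) ρ)

lemma mgfDist_nonneg (ρ : ℝ) (C : Euc d →L[ℝ] Euc m) (ν μ : Measure (Euc d)) :
    0 ≤ mgfDist ρ C ν μ :=
  Real.sSup_nonneg <| by rintro _ ⟨z, -, rfl⟩; exact abs_nonneg _

section Stability

variable {α : ℝ} {b : Euc m} {C : Euc d →L[ℝ] Euc m} {μ ν : Measure (Euc d)} {R ρ : ℝ}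
  [IsProbabilityMeasure μ] [IsProbabilityMeasure ν]
  (hμ : ∀ᵐ x ∂μ, ‖x‖ ≤ R) (hν : ∀ᵐ x ∂ν, ‖x‖ ≤ R)
include hμ hν

lemma abs_lmgf_sub_lmgf_le (y : Euc d) :
    |Lmgf μ y - Lmgf ν y| ≤ Real.exp (‖y‖ * R) * |Mgf μ y - Mgf ν y| := by
  simpa [Lmgf, Real.exp_neg] using
    abs_log_sub_log_le (Real.exp_pos _) (exp_neg_le_mgf hμ y) (exp_neg_le_mgf hν y)

lemma abs_mgf_sub_le_mgfDist {z : Euc m} (hz : ‖z‖ ≤ ρ) :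
    |Mgf μ (adjoint C z) - Mgf ν (adjoint C z)| ≤ mgfDist ρ C ν μ := by
  refine le_csSup ⟨2 * Real.exp (‖C‖ * ρ * R), ?_⟩ ⟨z, by simpa using hz, rfl⟩
  rintro _ ⟨w, hw, rfl⟩
  have hR := nonneg_of_ae_norm_le hμ
  have hAw : ‖adjoint C w‖ * R ≤ ‖C‖ * ρ * R := by
    gcongr
    exact (norm_adjoint_apply_le C w).trans (by gcongr; simpa using hw)
  have hexp := Real.exp_le_exp.2 hAw
  rw [abs_le]
  constructor <;> linarith [mgf_le_exp hμ (adjoint C w), mgf_le_exp hν (adjoint C w),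
    mgf_pos hμ (adjoint C w), mgf_pos hν (adjoint C w)]

lemma abs_qDual_sub_qDual_le {z : Euc m} (hz : ‖z‖ ≤ ρ) :
    |QDual α b C μ z - QDual α b C ν z| ≤ Real.exp (ρ * ‖C‖ * R) * mgfDist ρ C ν μ := by
  have hR := nonneg_of_ae_norm_le hμ
  have hAz : ‖adjoint C z‖ * R ≤ ρ * ‖C‖ * R := by
    gcongr
    exact (norm_adjoint_apply_le C z).trans (by rw [mul_comm]; gcongr)
  rw [QDual, QDual, add_sub_add_left_eq_sub]
  exact (abs_lmgf_sub_lmgf_le hμ hν _).trans (mul_le_mul (Real.exp_le_exp.2 hAz)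
    (abs_mgf_sub_le_mgfDist hμ hν hz) (abs_nonneg _) (Real.exp_pos _).le)

lemma sq_norm_sub_le_of_forall_le (hα : 0 < α) (hρ : 2 * α * (‖b‖ + ‖C‖ * R) ≤ ρ)
    {zμ zν : Euc m} (hzμ : ∀ w, QDual α b C μ zμ ≤ QDual α b C μ w)
    (hzν : ∀ w, QDual α b C ν zν ≤ QDual α b C ν w) :
    ‖zν - zμ‖ ^ 2 ≤ 4 * α * (Real.exp (ρ * ‖C‖ * R) * mgfDist ρ C ν μ) := by
  have hzμρ : ‖zμ‖ ≤ ρ := (norm_le_of_forall_qDual_le hμ hα hzμ).trans hρ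
  have hzνρ : ‖zν‖ ≤ ρ := (norm_le_of_forall_qDual_le hν hα hzν).trans hρ
  obtain ⟨hzμ', -⟩ := abs_le.1 (abs_qDual_sub_qDual_le (α := α) (b := b) (C := C) hμ hν hzμρ)
  obtain ⟨-, hzν'⟩ := abs_le.1 (abs_qDual_sub_qDual_le (α := α) (b := b) (C := C) hμ hν hzνρ)
  have hgrowth := (strongConvexOn_qDual hα (convexOn_lmgf hμ)).add_le_of_forall_le hzμ zν
  have := hzν zμ
  calc ‖zν - zμ‖ ^ 2 = 2 * α * (α⁻¹ / 2 * ‖zν - zμ‖ ^ 2) := by field_simp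
    _ ≤ 2 * α * (2 * (Real.exp (ρ * ‖C‖ * R) * mgfDist ρ C ν μ)) :=
        mul_le_mul_of_nonneg_left (by linarith) (by positivity)
    _ = _ := by ring

lemma norm_gradient_lmgf_sub_le_of_forall_le (hα : 0 < α) (hσ : 0 < sigmaMin C)
    (hρ : 2 * α * (‖b‖ + ‖C‖ * R) ≤ ρ) {zμ zν : Euc m}
    (hzμ : ∀ w, QDual α b C μ zμ ≤ QDual α b C μ w)
    (hzν : ∀ w, QDual α b C ν zν ≤ QDual α b C ν w) :
    ‖gradient (Lmgf ν) (adjoint C zν) - gradient (Lmgf μ) (adjoint C zμ)‖ ≤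
      2 * √(Real.exp (ρ * ‖C‖ * R) * mgfDist ρ C ν μ) / (√α * sigmaMin C) := by
  set x := gradient (Lmgf ν) (adjoint C zν) - gradient (Lmgf μ) (adjoint C zμ)
  have hdual := sq_norm_sub_le_of_forall_le hμ hν hα hρ hzμ hzν
  have hprimal : sigmaMin C * ‖x‖ ≤ α⁻¹ * ‖zν - zμ‖ := by
    have h := sigmaMin_mul_norm_le C x
    rwa [map_sub, apply_gradient_lmgf_of_forall_le hν hα hzν,
      apply_gradient_lmgf_of_forall_le hμ hα hzμ, sub_sub_sub_cancel_left, ← smul_sub,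
      norm_smul, norm_inv, Real.norm_of_nonneg hα.le, norm_sub_rev zμ] at h
  rw [le_div_iff₀ (by positivity), ← div_le_iff₀' two_pos]
  refine Real.le_sqrt_of_sq_le ?_
  calc (‖x‖ * (√α * sigmaMin C) / 2) ^ 2 = α * (sigmaMin C * ‖x‖) ^ 2 / 4 := by
        rw [div_pow, mul_pow, mul_pow, Real.sq_sqrt hα.le]; ring
    _ ≤ α * (α⁻¹ * ‖zν - zμ‖) ^ 2 / 4 := by gcongr
    _ = ‖zν - zμ‖ ^ 2 / (4 * α) := by field_simp
    _ ≤ _ := by rw [div_le_iff₀ (by positivity)]; linarith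

theorem norm_gradient_lmgf_sub_le [Nontrivial (Euc d)] (hα : 0 < α)
    (hC : Function.Injective C) (hρ : 2 * α * (‖b‖ + ‖C‖ * R) ≤ ρ) {ε r K : ℝ}
    (hr : ‖C‖ * (2 * α * (‖b‖ + ‖C‖ * R) + √(2 * α * ε)) ≤ r)
    (hK : ∀ u v, ‖u‖ ≤ r → ‖v‖ ≤ r →
      ‖gradient (Lmgf ν) u - gradient (Lmgf ν) v‖ ≤ K * ‖u - v‖)
    {zμ zε : Euc m} (hzμ : ∀ w, QDual α b C μ zμ ≤ QDual α b C μ w)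
    (hzε : ∀ w, QDual α b C ν zε ≤ QDual α b C ν w + ε) :
    ‖gradient (Lmgf ν) (adjoint C zε) - gradient (Lmgf μ) (adjoint C zμ)‖ ≤
      Real.exp (ρ * ‖C‖ * R) / (α * sigmaMin C) * mgfDist ρ C ν μ +
        2 * √(2 * Real.exp (ρ * ‖C‖ * R)) / (√α * sigmaMin C) * √(mgfDist ρ C ν μ) +
        (K * ‖C‖ * √(2 * α) + 2 / (√α * sigmaMin C)) * √ε := by
  obtain ⟨zν, hzν⟩ := exists_forall_qDual_le hν hα
  have hσ := sigmaMin_pos hC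
  have hE := mgfDist_nonneg ρ C ν μ
  have hK₁ := Real.exp_pos (ρ * ‖C‖ * R)
  have hpert := norm_gradient_lmgf_sub_le_of_forall_le_add hν hα hzν hzε hr hK
  have hprimal := norm_gradient_lmgf_sub_le_of_forall_le hμ hν hα hσ hρ hzμ hzν
  have hsqrt : 2 * √(Real.exp (ρ * ‖C‖ * R) * mgfDist ρ C ν μ) / (√α * sigmaMin C) ≤
      2 * √(2 * Real.exp (ρ * ‖C‖ * R)) / (√α * sigmaMin C) * √(mgfDist ρ C ν μ) := by
    rw [Real.sqrt_mul hK₁.le, div_mul_eq_mul_div, mul_assoc 2]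
    gcongr
    linarith
  have hpert' : K * (‖C‖ * √(2 * α * ε)) = K * ‖C‖ * √(2 * α) * √ε := by
    rw [Real.sqrt_mul (by positivity)]
    ring
  -- The argument gives `K ‖C‖ √(2αε) + 2 √(K₁ E) / (√α σ)`; the remaining terms are slack.
  have hslack₁ : 0 ≤ Real.exp (ρ * ‖C‖ * R) / (α * sigmaMin C) * mgfDist ρ C ν μ := by
    positivity
  have hslack₂ : 0 ≤ 2 / (√α * sigmaMin C) * √ε := by positivity
  calc _ ≤ ‖gradient (Lmgf ν) (adjoint C zε) - gradient (Lmgf ν) (adjoint C zν)‖ +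
        ‖gradient (Lmgf ν) (adjoint C zν) - gradient (Lmgf μ) (adjoint C zμ)‖ :=
        norm_sub_le_norm_sub_add_norm_sub _ _ _
    _ ≤ _ := by linarith

end Stability

lemma empMgf_eq_mgf {Ω : Type*} (X : ℕ → Ω → Euc d) (n : ℕ) (ω : Ω) :
    EmpMgf X n ω = Mgf (empiricalMeasure (X · ω) n) := by
  ext y
  rw [Mgf, integral_empiricalMeasure, EmpMgf]

lemma empLmgf_eq_lmgf {Ω : Type*} (X : ℕ → Ω → Euc d) (n : ℕ) (ω : Ω) :
    EmpLmgf X n ω = Lmgf (empiricalMeasure (X · ω) n) := by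
  ext y
  rw [EmpLmgf, empMgf_eq_mgf, Lmgf]

lemma qDualEmp_eq_qDual {Ω : Type*} (α : ℝ) (b : Euc m) (C : Euc d →L[ℝ] Euc m)
    (X : ℕ → Ω → Euc d) (n : ℕ) (ω : Ω) :
    QDualEmp α b C X n ω = QDual α b C (empiricalMeasure (X · ω) n) := by
  ext z
  rw [QDualEmp, empLmgf_eq_lmgf, QDual]

lemma norm_le_xBound {Xs : Set (Euc d)} (hXs : IsCompact Xs) {x : Euc d} (hx : x ∈ Xs) :
    ‖x‖ ≤ XBound Xs :=
  le_csSup (hXs.image continuous_norm).bddAbove ⟨x, hx, rfl⟩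

end MEM

theorem empirical_primal_error_bound_pathwise_general
    (d m : ℕ) (hd : 0 < d)
    (Xs : Set (Euc d)) (hXc : IsCompact Xs)
    (μ : Measure (Euc d)) (hμP : IsProbabilityMeasure μ) (hμX : ∀ᵐ x ∂μ, x ∈ Xs)
    (C : Euc d →L[ℝ] Euc m) (hrank : Function.Injective ⇑C)
    (α : ℝ) (hα : 0 < α) (b : Euc m)
    (Ω : Type)
    (X : ℕ → Ω → Euc d)
    (hXval : ∀ i ω, X i ω ∈ Xs) :
    ∀ ρ : ℝ, rho0 α b C Xs < ρ →
    ∀ ε : ℝ, 0 ≤ ε → ε ≤ ρ - rho0 α b C Xs →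
    ∀ K₂ : ℝ,
      (∀ lam : Measure (Euc d), IsProbabilityMeasure lam → (∀ᵐ x ∂lam, x ∈ Xs) →
        ∀ u v : Euc d,
          ‖u‖ ≤ ‖C‖ * (rho0 α b C Xs + Real.sqrt (2 * α * ε)) →
          ‖v‖ ≤ ‖C‖ * (rho0 α b C Xs + Real.sqrt (2 * α * ε)) →
          ‖gradient (Lmgf lam) u - gradient (Lmgf lam) v‖ ≤ K₂ * ‖u - v‖) →
    ∀ zμ : Euc m, (∀ z, QDual α b C μ zμ ≤ QDual α b C μ z) →
    ∀ n : ℕ, 0 < n → ∀ ω : Ω,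
    ∀ znε : Euc m, (∀ w, QDualEmp α b C X n ω znε ≤ QDualEmp α b C X n ω w + ε) →
      ‖gradient (EmpLmgf X n ω) (ContinuousLinearMap.adjoint C znε) -
          gradient (Lmgf μ) (ContinuousLinearMap.adjoint C zμ)‖ ≤
        (Real.exp (ρ * ‖C‖ * XBound Xs) / (α * sigmaMin C)) *
            sSup ((fun z => |Mgf μ (ContinuousLinearMap.adjoint C z) -
                EmpMgf X n ω (ContinuousLinearMap.adjoint C z)|) ''
              Metric.closedBall (0 : Euc m) ρ) +
          (2 * Real.sqrt (2 * Real.exp (ρ * ‖C‖ * XBound Xs)) /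
              (Real.sqrt α * sigmaMin C)) *
            Real.sqrt (sSup ((fun z => |Mgf μ (ContinuousLinearMap.adjoint C z) -
                EmpMgf X n ω (ContinuousLinearMap.adjoint C z)|) ''
              Metric.closedBall (0 : Euc m) ρ)) +
          (K₂ * ‖C‖ * Real.sqrt (2 * α) + 2 / (Real.sqrt α * sigmaMin C)) *
            Real.sqrt ε := by
  intro ρ hρ ε _ _ K₂ hK₂ zμ hzμ n hn ω zε hzε
  have : NeZero d := ⟨hd.ne'⟩
  have : IsProbabilityMeasure (empiricalMeasure (X · ω) n) :=
    isProbabilityMeasure_empiricalMeasure hn.ne'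
  have hνX : ∀ᵐ x ∂empiricalMeasure (X · ω) n, x ∈ Xs := ae_empiricalMeasure (hXval · ω)
  have hbound : ∀ {ν : Measure (Euc d)}, (∀ᵐ x ∂ν, x ∈ Xs) → ∀ᵐ x ∂ν, ‖x‖ ≤ XBound Xs :=
    fun h => h.mono fun _ => MEM.norm_le_xBound hXc
  have hrhoHat : rhoHat α b C Xs ≤ rho0 α b C Xs := le_max_left _ _
  rw [MEM.qDualEmp_eq_qDual] at hzε
  rw [MEM.empLmgf_eq_lmgf, MEM.empMgf_eq_mgf]
  exact MEM.norm_gradient_lmgf_sub_le (hbound hμX) (hbound hνX) hα hrank (hrhoHat.trans hρ.le)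
    (by gcongr; exact hrhoHat) (hK₂ _ ‹_› hνX) hzμ hzε

/-- pathwise quantitative primal error bound for the empirical prior, in
terms of the sup-distance `E_n(ω)` of the moment generating functions on `B_ρ`. -/
theorem empirical_primal_error_bound_pathwise
    (d m : ℕ) (hd : 0 < d) (hm : 0 < m)
    (Xs : Set (Euc d)) (hXc : IsCompact Xs) (hXne : Xs.Nonempty)
    (μ : Measure (Euc d)) (hμP : IsProbabilityMeasure μ) (hμX : ∀ᵐ x ∂μ, x ∈ Xs)
    (C : Euc d →L[ℝ] Euc m) (hrank : Function.Injective ⇑C)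
    (α : ℝ) (hα : 0 < α) (b : Euc m)
    (Ω : Type) (mΩ : MeasurableSpace Ω) (P : Measure Ω) (hP : IsProbabilityMeasure P)
    (X : ℕ → Ω → Euc d) (hXmeas : ∀ i, Measurable (X i))
    (hlaw : ∀ i, Measure.map (X i) P = μ)
    (hindep : iIndepFun X P)
    (hXval : ∀ i ω, X i ω ∈ Xs) :
    ∀ ρ : ℝ, rho0 α b C Xs < ρ →
    ∀ ε : ℝ, 0 ≤ ε → ε ≤ ρ - rho0 α b C Xs →
    ∀ K₂ : ℝ,
      (∀ lam : Measure (Euc d), IsProbabilityMeasure lam → (∀ᵐ x ∂lam, x ∈ Xs) →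
        ∀ u v : Euc d,
          ‖u‖ ≤ ‖C‖ * (rho0 α b C Xs + Real.sqrt (2 * α * ε)) →
          ‖v‖ ≤ ‖C‖ * (rho0 α b C Xs + Real.sqrt (2 * α * ε)) →
          ‖gradient (Lmgf lam) u - gradient (Lmgf lam) v‖ ≤ K₂ * ‖u - v‖) →
    ∀ zμ : Euc m, (∀ z, QDual α b C μ zμ ≤ QDual α b C μ z) →
    ∀ n : ℕ, 0 < n → ∀ ω : Ω,
    ∀ znε : Euc m, (∀ w, QDualEmp α b C X n ω znε ≤ QDualEmp α b C X n ω w + ε) →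
      ‖gradient (EmpLmgf X n ω) (ContinuousLinearMap.adjoint C znε) -
          gradient (Lmgf μ) (ContinuousLinearMap.adjoint C zμ)‖ ≤
        (Real.exp (ρ * ‖C‖ * XBound Xs) / (α * sigmaMin C)) *
            sSup ((fun z => |Mgf μ (ContinuousLinearMap.adjoint C z) -
                EmpMgf X n ω (ContinuousLinearMap.adjoint C z)|) ''
              Metric.closedBall (0 : Euc m) ρ) +
          (2 * Real.sqrt (2 * Real.exp (ρ * ‖C‖ * XBound Xs)) /
              (Real.sqrt α * sigmaMin C)) *
            Real.sqrt (sSup ((fun z => |Mgf μ (ContinuousLinearMap.adjoint C z) -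
                EmpMgf X n ω (ContinuousLinearMap.adjoint C z)|) ''
              Metric.closedBall (0 : Euc m) ρ)) +
          (K₂ * ‖C‖ * Real.sqrt (2 * α) + 2 / (Real.sqrt α * sigmaMin C)) *
            Real.sqrt ε :=
  empirical_primal_error_bound_pathwise_general d m hd Xs hXc μ hμP hμX C hrank α hα b Ω X hXval
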